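/- arXiv:2305.02795 — 2 statements merged into one kernel-verified Lean document; each statement's English description precedes it below -/
import Mathlib

section
/- Suppose that for every class k ∈ {1,…,q}, the per-class pseudo-labeling error satisfies (1/m)·Σ_{j=1}^m |1[g_{jk} ≥ τ_k] − y_{jk}| ≤ ε. Then |R̂'_u − R̂_u| ≤ q·B·ε, where R̂_u = (1/m)·Σ_{j=1}^m Σ_{k=1}^q [ y_{jk}·ℓ1(g_{jk}) + (1 − y_{jk})·ℓ0(g_{jk}) ] is the unlabeled empirical risk with true labels and R̂'_u = (1/m)·Σ_{j=1}^m Σ_{k=1}^q [ 1[g_{jk} ≥ τ_k]·ℓ1(g_{jk}) + 1[g_{jk} < τ_k]·ℓ0(g_{jk}) ] is the unlabeled empirical risk with pseudo-labels. -/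
/-! Pointwise, the pseudo-label risk and the true risk differ by `(ŷ - y) (ℓ1 - ℓ0)` because
`1[g ≥ τ] + 1[g < τ] = 1`. Since both losses lie in `[0, B]`, `|ℓ1 - ℓ0| ≤ B`, so each class
contributes at most `B` times its pseudo-labeling error `ε` to the averaged difference, and
summing over the `q` classes gives `q B ε`. -/

open Finset

theorem threshold_risk_sub_risk (t τ y a b : ℝ) :
    ((if τ ≤ t then (1 : ℝ) else 0) * a + (if t < τ then (1 : ℝ) else 0) * b)
      - (y * a + (1 - y) * b)
      = ((if τ ≤ t then (1 : ℝ) else 0) - y) * (a - b) := by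
  by_cases h : τ ≤ t
  · simp only [h, if_true, not_lt.mpr h, if_false]; ring
  · simp only [h, if_false, not_le.mp h, if_true]; ring

theorem abs_mul_sum_sum_le_card_mul {ι κ : Type*} [Fintype ι] [Fintype κ] {c B ε : ℝ}
    (hc : 0 ≤ c) (hB : 0 ≤ B) {d e : ι → κ → ℝ} (hd : ∀ j k, |d j k| ≤ B * e j k)
    (he : ∀ k, c * ∑ j, e j k ≤ ε) :
    |c * ∑ j, ∑ k, d j k| ≤ Fintype.card κ * B * ε := by
  calc |c * ∑ j, ∑ k, d j k| = c * |∑ k, ∑ j, d j k| := by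
        rw [abs_mul, abs_of_nonneg hc, sum_comm]
    _ ≤ c * ∑ k, ∑ j, |d j k| := by
        gcongr
        exact (abs_sum_le_sum_abs _ _).trans (sum_le_sum fun k _ => abs_sum_le_sum_abs _ _)
    _ ≤ c * ∑ k, ∑ j, B * e j k := by gcongr with k _ j _; exact hd j k
    _ = ∑ k, B * (c * ∑ j, e j k) := by simp only [mul_sum]; ring_nf
    _ ≤ ∑ k, B * ε := by gcongr with k _; exact he k
    _ = Fintype.card κ * B * ε := by simp [mul_assoc]

theorem pseudo_risk_close_to_true_risk_general
    (m q : ℕ)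
    (B ε : ℝ)
    (y : Fin m → Fin q → ℝ)
    (g : Fin m → Fin q → ℝ) (τ : Fin q → ℝ)
    (ℓ1 ℓ0 : ℝ → ℝ)
    (hℓ1 : ∀ t, 0 ≤ ℓ1 t ∧ ℓ1 t ≤ B)
    (hℓ0 : ∀ t, 0 ≤ ℓ0 t ∧ ℓ0 t ≤ B)
    (herr : ∀ k, (1 / (m : ℝ)) *
      ∑ j, |(if τ k ≤ g j k then (1 : ℝ) else 0) - y j k| ≤ ε) :
    |(1 / (m : ℝ)) * ∑ j, ∑ k,
        ((if τ k ≤ g j k then (1 : ℝ) else 0) * ℓ1 (g j k)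
          + (if g j k < τ k then (1 : ℝ) else 0) * ℓ0 (g j k))
      - (1 / (m : ℝ)) * ∑ j, ∑ k,
        (y j k * ℓ1 (g j k) + (1 - y j k) * ℓ0 (g j k))|
      ≤ q * B * ε := by
  have hB : 0 ≤ B := (hℓ1 0).1.trans (hℓ1 0).2
  have hloss (t : ℝ) : |ℓ1 t - ℓ0 t| ≤ B :=
    abs_sub_le_of_nonneg_of_le (hℓ1 t).1 (hℓ1 t).2 (hℓ0 t).1 (hℓ0 t).2
  rw [← mul_sub, ← sum_sub_distrib]
  simp only [← sum_sub_distrib, threshold_risk_sub_risk]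
  simpa using abs_mul_sum_sum_le_card_mul (by positivity) hB
    (fun j k => by
      rw [abs_mul, mul_comm B]
      exact mul_le_mul_of_nonneg_left (hloss _) (abs_nonneg _))
    herr

/-- Lemma 2 in the appendix of the paper: if the per-class pseudo-labeling error is at
most `ε` for every class `k`, then the unlabeled empirical risk computed with
pseudo-labels `R̂'_u` and the one computed with true labels `R̂_u` differ by at most
`q·B·ε`. -/
theorem pseudo_risk_close_to_true_risk
    (m q : ℕ) (hm : 1 ≤ m) (hq : 1 ≤ q)
    (B ε : ℝ) (hB : 0 < B)
    (y : Fin m → Fin q → ℝ) (hy : ∀ j k, y j k = 0 ∨ y j k = 1)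
    (g : Fin m → Fin q → ℝ) (τ : Fin q → ℝ)
    (ℓ1 ℓ0 : ℝ → ℝ)
    (hℓ1 : ∀ t, 0 ≤ ℓ1 t ∧ ℓ1 t ≤ B)
    (hℓ0 : ∀ t, 0 ≤ ℓ0 t ∧ ℓ0 t ≤ B)
    (herr : ∀ k, (1 / (m : ℝ)) *
      ∑ j, |(if τ k ≤ g j k then (1 : ℝ) else 0) - y j k| ≤ ε) :
    |(1 / (m : ℝ)) * ∑ j, ∑ k,
        ((if τ k ≤ g j k then (1 : ℝ) else 0) * ℓ1 (g j k)
          + (if g j k < τ k then (1 : ℝ) else 0) * ℓ0 (g j k))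
      - (1 / (m : ℝ)) * ∑ j, ∑ k,
        (y j k * ℓ1 (g j k) + (1 - y j k) * ℓ0 (g j k))|
      ≤ q * B * ε :=
  pseudo_risk_close_to_true_risk_general m q B ε y g τ ℓ1 ℓ0 hℓ1 hℓ0 herr
end

section
/- Suppose that for every class k ∈ {1,…,q}, the per-class pseudo-labeling error satisfies (1/m)·Σ_{j=1}^m |1[g_{jk} ≥ τ_k] − y_{jk}| ≤ ε. Then the pseudo-label empirical risk is upper bounded by the true-label empirical risk plus q·B·ε: R̂'_u ≤ R̂_u + q·B·ε, where R̂_u = (1/m)·Σ_{j=1}^m Σ_{k=1}^q [ y_{jk}·ℓ1(g_{jk}) + (1 − y_{jk})·ℓ0(g_{jk}) ] and R̂'_u = (1/m)·Σ_{j=1}^m Σ_{k=1}^q [ 1[g_{jk} ≥ τ_k]·ℓ1(g_{jk}) + 1[g_{jk} < τ_k]·ℓ0(g_{jk}) ]. -/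
open Finset

/- Pointwise, the pseudo-label loss and the true-label loss are the two affine
combinations `a ℓ1 + (1 - a) ℓ0` and `y ℓ1 + (1 - y) ℓ0`; they differ by
`(a - y)(ℓ1 - ℓ0)`, and `|ℓ1 - ℓ0| ≤ B` since both losses lie in `[0, B]`. Summing
over instances and classes and averaging over instances, the error term becomes
`B` times the sum over classes of the per-class pseudo-labeling errors, each at
most `ε`. -/

lemma ite_lt_eq_one_sub_ite_le {α : Type*} [LinearOrder α] (a b : α) :
    (if a < b then (1 : ℝ) else 0) = 1 - if b ≤ a then 1 else 0 := by
  rcases lt_or_ge a b with h | h <;> simp [h, not_le_of_gt, not_lt_of_ge]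

lemma mul_add_one_sub_mul_le_add_mul_abs_sub {a y u v B : ℝ} (huv : |u - v| ≤ B) :
    a * u + (1 - a) * v ≤ y * u + (1 - y) * v + B * |a - y| :=
  calc a * u + (1 - a) * v = y * u + (1 - y) * v + (a - y) * (u - v) := by ring
    _ ≤ y * u + (1 - y) * v + |a - y| * |u - v| := by
        rw [← abs_mul]; gcongr; exact le_abs_self _
    _ ≤ y * u + (1 - y) * v + B * |a - y| := by
        rw [mul_comm B]; gcongr

lemma mul_sum_sum_le_card_mul {ι κ : Type*} [Fintype ι] [Fintype κ]
    {f : ι → κ → ℝ} {c ε : ℝ} (hf : ∀ k, c * ∑ i, f i k ≤ ε) :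
    c * ∑ i, ∑ k, f i k ≤ Fintype.card κ * ε :=
  calc c * ∑ i, ∑ k, f i k = ∑ k, c * ∑ i, f i k := by rw [sum_comm, mul_sum]
    _ ≤ ∑ _k : κ, ε := sum_le_sum fun k _ => hf k
    _ = Fintype.card κ * ε := by rw [sum_const, card_univ, nsmul_eq_mul]

theorem pseudo_risk_upper_bound_general
    (m q : ℕ)
    (B ε : ℝ)
    (y : Fin m → Fin q → ℝ)
    (g : Fin m → Fin q → ℝ) (τ : Fin q → ℝ)
    (ℓ1 ℓ0 : ℝ → ℝ)
    (hℓ1 : ∀ t, 0 ≤ ℓ1 t ∧ ℓ1 t ≤ B)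
    (hℓ0 : ∀ t, 0 ≤ ℓ0 t ∧ ℓ0 t ≤ B)
    (herr : ∀ k, (1 / (m : ℝ)) *
      ∑ j, |(if τ k ≤ g j k then (1 : ℝ) else 0) - y j k| ≤ ε) :
    (1 / (m : ℝ)) * ∑ j, ∑ k,
        ((if τ k ≤ g j k then (1 : ℝ) else 0) * ℓ1 (g j k)
          + (if g j k < τ k then (1 : ℝ) else 0) * ℓ0 (g j k))
      ≤ (1 / (m : ℝ)) * ∑ j, ∑ k,
          (y j k * ℓ1 (g j k) + (1 - y j k) * ℓ0 (g j k))
        + q * B * ε := by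
  have hB : 0 ≤ B := (hℓ1 0).1.trans (hℓ1 0).2
  have hpoint : ∀ j k,
      (if τ k ≤ g j k then (1 : ℝ) else 0) * ℓ1 (g j k)
          + (if g j k < τ k then (1 : ℝ) else 0) * ℓ0 (g j k)
        ≤ y j k * ℓ1 (g j k) + (1 - y j k) * ℓ0 (g j k)
          + B * |(if τ k ≤ g j k then (1 : ℝ) else 0) - y j k| := fun j k => by
    rw [ite_lt_eq_one_sub_ite_le]
    exact mul_add_one_sub_mul_le_add_mul_abs_sub <| abs_sub_le_of_nonneg_of_le
      (hℓ1 _).1 (hℓ1 _).2 (hℓ0 _).1 (hℓ0 _).2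
  have herr_total := mul_sum_sum_le_card_mul herr
  rw [Fintype.card_fin] at herr_total
  calc _ ≤ (1 / (m : ℝ)) * ∑ j, ∑ k,
          (y j k * ℓ1 (g j k) + (1 - y j k) * ℓ0 (g j k)
            + B * |(if τ k ≤ g j k then (1 : ℝ) else 0) - y j k|) :=
        mul_le_mul_of_nonneg_left (sum_le_sum fun j _ => sum_le_sum fun k _ => hpoint j k)
          (by positivity)
    _ = (1 / (m : ℝ)) * ∑ j, ∑ k, (y j k * ℓ1 (g j k) + (1 - y j k) * ℓ0 (g j k))
          + B * ((1 / (m : ℝ)) * ∑ j, ∑ k,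
            |(if τ k ≤ g j k then (1 : ℝ) else 0) - y j k|) := by
        simp only [sum_add_distrib, ← mul_sum]
        ring
    _ ≤ _ := by linarith [mul_le_mul_of_nonneg_left herr_total hB]

/-- Upper-bound direction in the proof of Lemma 2: the pseudo-label empirical risk
`R̂'_u` is at most the true-label empirical risk `R̂_u` plus `q·B·ε`. -/
theorem pseudo_risk_upper_bound
    (m q : ℕ) (hm : 1 ≤ m) (hq : 1 ≤ q)
    (B ε : ℝ) (hB : 0 < B)
    (y : Fin m → Fin q → ℝ) (hy : ∀ j k, y j k = 0 ∨ y j k = 1)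
    (g : Fin m → Fin q → ℝ) (τ : Fin q → ℝ)
    (ℓ1 ℓ0 : ℝ → ℝ)
    (hℓ1 : ∀ t, 0 ≤ ℓ1 t ∧ ℓ1 t ≤ B)
    (hℓ0 : ∀ t, 0 ≤ ℓ0 t ∧ ℓ0 t ≤ B)
    (herr : ∀ k, (1 / (m : ℝ)) *
      ∑ j, |(if τ k ≤ g j k then (1 : ℝ) else 0) - y j k| ≤ ε) :
    (1 / (m : ℝ)) * ∑ j, ∑ k,
        ((if τ k ≤ g j k then (1 : ℝ) else 0) * ℓ1 (g j k)
          + (if g j k < τ k then (1 : ℝ) else 0) * ℓ0 (g j k))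
      ≤ (1 / (m : ℝ)) * ∑ j, ∑ k,
          (y j k * ℓ1 (g j k) + (1 - y j k) * ℓ0 (g j k))
        + q * B * ε :=
  pseudo_risk_upper_bound_general m q B ε y g τ ℓ1 ℓ0 hℓ1 hℓ0 herr
end
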